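/- For every n ≥ 2 and every ε > 0, there exists a finite Blaschke product B of degree n with B(0) = 0 and B'(0) ≠ 0 such that max{|B(ζ)/(ζ B'(0))| : B'(ζ) = 0, ζ ∈ D} < 1/n + ε. Consequently L_n ≤ 1/n. -/

import Mathlib

/-!
Take `B = C ∘ M` with `M w = (w + a) / (1 + a w)` (`mobius a`) and
`C s = (s ^ n - a ^ n) / (1 - a ^ n s ^ n)` (`powBlaschke n a`) for small `a > 0`. Factoring
`(w + a) ^ n - (a (1 + a w)) ^ n` and `(1 + a w) ^ n - (a (w + a)) ^ n` over the `n`-th roots of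
unity exhibits `B` as a Blaschke product of degree `n` with `B 0 = 0`. Since `M'` never vanishes
and `C'` vanishes only at `0`, the only critical point of `B` in the disk is `-a = M⁻¹ 0`, where
`B (-a) = C 0 = -a ^ n`, while `B' 0 = C' a · M' 0`. The resulting ratio
`(1 - a ^ (2 n)) / (n (1 - a ^ 2))` tends to `1 / n` as `a → 0`.
-/

open Complex ComplexConjugate Finset Filter Topology

theorem prod_range_sub_pow_mul {R : Type*} [CommRing R] [IsDomain R] {n : ℕ} {ω : R}
    (hω : IsPrimitiveRoot ω n) (hn : 0 < n) (x y : R) :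
    ∏ i ∈ range n, (x - ω ^ i * y) = x ^ n - y ^ n := by
  simpa [Polynomial.eval_prod] using
    congrArg (Polynomial.eval x) (X_pow_sub_C_eq_prod hω hn rfl).symm

noncomputable def blaschkeFactor (z w : ℂ) : ℂ := (w - z) / (1 - conj z * w)

noncomputable def mobius (a w : ℂ) : ℂ := (w + a) / (1 + a * w)

noncomputable def powBlaschke (n : ℕ) (a s : ℂ) : ℂ := (s ^ n - a ^ n) / (1 - a ^ n * s ^ n)

theorem one_add_mul_ne_zero {a : ℝ} (ha : |a| < 1) {w : ℂ} (hw : ‖w‖ < 1) :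
    1 + a * w ≠ 0 := by
  intro h
  have h1 : ‖(a : ℂ) * w‖ = 1 := by rw [eq_neg_of_add_eq_zero_right h, norm_neg, norm_one]
  rw [norm_mul, norm_real, Real.norm_eq_abs] at h1
  nlinarith [abs_nonneg a, norm_nonneg w]

theorem one_sub_pow_mul_pow_ne_zero {a : ℝ} (ha : |a| < 1) {s : ℂ} (hs : ‖s‖ < 1) {n : ℕ}
    (hn : n ≠ 0) : 1 - a ^ n * s ^ n ≠ 0 := by
  rw [← mul_pow, sub_ne_zero, ne_comm]
  refine ne_of_apply_ne norm (ne_of_lt ?_)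
  rw [norm_one, norm_pow]
  refine pow_lt_one₀ (norm_nonneg _) ?_ hn
  rw [norm_mul, norm_real, Real.norm_eq_abs]
  nlinarith [abs_nonneg a, norm_nonneg s]

theorem one_sub_sq_ne_zero {a : ℝ} (ha : |a| < 1) : (1 : ℂ) - a ^ 2 ≠ 0 := by
  exact_mod_cast (show (1 : ℝ) - a ^ 2 ≠ 0 by nlinarith [sq_abs a, abs_nonneg a])

theorem one_sub_pow_two_mul_ne_zero {a : ℝ} (ha : |a| < 1) {n : ℕ} (hn : n ≠ 0) :
    (1 : ℂ) - a ^ (2 * n) ≠ 0 := by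
  rw [two_mul, pow_add]
  exact one_sub_pow_mul_pow_ne_zero ha (by rwa [norm_real, Real.norm_eq_abs]) hn

theorem norm_mobius_lt_one {a : ℝ} (ha : |a| < 1) {w : ℂ} (hw : ‖w‖ < 1) :
    ‖mobius a w‖ < 1 := by
  have key : ‖1 + a * w‖ ^ 2 = ‖w + a‖ ^ 2 + (1 - a ^ 2) * (1 - ‖w‖ ^ 2) := by
    simp only [Complex.sq_norm, normSq_apply, add_re, add_im, mul_re, mul_im, ofReal_re, ofReal_im,
      one_re, one_im]
    ring
  have ha2 : a ^ 2 < 1 := by nlinarith [sq_abs a, abs_nonneg a]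
  have hw2 : ‖w‖ ^ 2 < 1 := by nlinarith [norm_nonneg w]
  rw [mobius, norm_div, div_lt_one (norm_pos_iff.mpr (one_add_mul_ne_zero ha hw))]
  exact lt_of_pow_lt_pow_left₀ 2 (norm_nonneg _) (by nlinarith)

/-- `mobius (-a)` inverts `mobius a`, so `mobius (-a) (a * ζ)` is the zero of `C ∘ M` lying over
the zero `a * ζ` of `C`. -/
theorem blaschkeFactor_mobius_neg {a : ℝ} {ζ : ℂ} (hζ : 1 - ζ * a ^ 2 ≠ 0) (w : ℂ) :
    blaschkeFactor (mobius (-a) (a * ζ)) w =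
      (w + a - ζ * (a * (1 + a * w))) / (1 + a * w - conj ζ * (a * (w + a))) *
        ((1 - conj ζ * a ^ 2) / (1 - ζ * a ^ 2)) := by
  have hζ' : 1 - conj ζ * a ^ 2 ≠ 0 := by
    simpa using (map_ne_zero (starRingEnd ℂ)).mpr hζ
  have hzero : mobius (-a) (a * ζ) = (a * ζ - a) / (1 - ζ * a ^ 2) := by
    rw [mobius]; congr 1; ring
  have hnum : w - mobius (-a) (a * ζ) = (w + a - ζ * (a * (1 + a * w))) / (1 - ζ * a ^ 2) := by
    rw [hzero, eq_div_iff hζ, sub_mul, div_mul_cancel₀ _ hζ]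
    ring
  have hden : 1 - conj (mobius (-a) (a * ζ)) * w =
      (1 + a * w - conj ζ * (a * (w + a))) / (1 - conj ζ * a ^ 2) := by
    rw [hzero, eq_div_iff hζ']
    simp only [map_div₀, map_sub, map_mul, map_one, map_pow, conj_ofReal]
    rw [sub_mul, div_mul_eq_mul_div, div_mul_cancel₀ _ hζ']
    ring
  rw [blaschkeFactor, hnum, hden, div_div_div_eq, div_mul_div_comm, mul_comm (1 - ζ * _)]

theorem prod_blaschkeFactor_mobius_neg {n : ℕ} (hn : 0 < n) {ω : ℂ} (hω : IsPrimitiveRoot ω n)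
    {a : ℝ} (ha : |a| < 1) (w : ℂ) :
    ∏ i ∈ range n, blaschkeFactor (mobius (-a) (a * ω ^ i)) w =
      ((w + a) ^ n - a ^ n * (1 + a * w) ^ n) / ((1 + a * w) ^ n - a ^ n * (w + a) ^ n) := by
  -- the denominators are indexed by the conjugate root, again a primitive root
  have hω' : IsPrimitiveRoot (conj ω) n := hω.map_of_injective (RingHom.injective _)
  have hc : ∀ i, 1 - ω ^ i * a ^ 2 ≠ 0 := by
    intro i h
    have h1 : ‖ω ^ i * (a : ℂ) ^ 2‖ = 1 := by rw [← sub_eq_zero.mp h, norm_one]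
    rw [norm_mul, norm_pow, hω.norm'_eq_one hn.ne', one_pow, one_mul, norm_pow, norm_real,
      Real.norm_eq_abs] at h1
    nlinarith [abs_nonneg a]
  have hK : (1 : ℂ) - (a ^ 2) ^ n ≠ 0 := by
    rw [← one_pow n, ← prod_range_sub_pow_mul hω hn]
    exact prod_ne_zero_iff.mpr fun i _ => hc i
  simp only [blaschkeFactor_mobius_neg (hc _), map_pow, prod_mul_distrib, prod_div_distrib,
    prod_range_sub_pow_mul hω hn, prod_range_sub_pow_mul hω' hn, one_pow, div_self hK, mul_one,
    mul_pow]

theorem powBlaschke_mobius {a w : ℂ} (hw : 1 + a * w ≠ 0) (n : ℕ) :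
    powBlaschke n a (mobius a w) =
      ((w + a) ^ n - a ^ n * (1 + a * w) ^ n) / ((1 + a * w) ^ n - a ^ n * (w + a) ^ n) := by
  have hv : (1 + a * w) ^ n ≠ 0 := pow_ne_zero n hw
  rw [powBlaschke, mobius, div_pow, eq_comm, ← div_div_div_cancel_right₀ hv]
  congr 1
  · rw [sub_div, mul_div_cancel_right₀ _ hv]
  · rw [sub_div, div_self hv, mul_div_assoc]

theorem mul_prod_blaschkeFactor_eq_powBlaschke_mobius {n : ℕ} (hn : 0 < n) {ω : ℂ}
    (hω : IsPrimitiveRoot ω n) {a : ℝ} (ha : |a| < 1) {w : ℂ} (hw : ‖w‖ < 1) :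
    w * ∏ k : Fin (n - 1), blaschkeFactor (mobius (-a) (a * ω ^ ((k : ℕ) + 1))) w =
      powBlaschke n a (mobius a w) := by
  obtain ⟨m, rfl⟩ : ∃ m, n = m + 1 := ⟨n - 1, by omega⟩
  rw [powBlaschke_mobius (one_add_mul_ne_zero ha hw), ← prod_blaschkeFactor_mobius_neg hn hω ha,
    prod_range_succ', Nat.add_sub_cancel,
    Fin.prod_univ_eq_prod_range (fun k => blaschkeFactor (mobius (-a) (a * ω ^ (k + 1))) w)]
  simp [blaschkeFactor, mobius, mul_comm]

theorem hasDerivAt_mobius {a w : ℂ} (hw : 1 + a * w ≠ 0) :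
    HasDerivAt (mobius a) ((1 - a ^ 2) / (1 + a * w) ^ 2) w := by
  refine (((hasDerivAt_id' w).add_const a).div
    (((hasDerivAt_id' w).const_mul a).const_add 1) hw).congr_deriv ?_
  ring

theorem hasDerivAt_powBlaschke (n : ℕ) {a s : ℂ} (hs : 1 - a ^ n * s ^ n ≠ 0) :
    HasDerivAt (powBlaschke n a)
      (n * s ^ (n - 1) * (1 - a ^ (2 * n)) / (1 - a ^ n * s ^ n) ^ 2) s := by
  refine (((hasDerivAt_pow n s).sub_const (a ^ n)).div
    (((hasDerivAt_pow n s).const_mul (a ^ n)).const_sub 1) hs).congr_deriv ?_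
  ring

theorem hasDerivAt_powBlaschke_comp_mobius {a : ℝ} (ha : |a| < 1) {n : ℕ} (hn : n ≠ 0) {w : ℂ}
    (hw : ‖w‖ < 1) :
    HasDerivAt (powBlaschke n a ∘ mobius a)
      (n * mobius a w ^ (n - 1) * (1 - a ^ (2 * n)) / (1 - a ^ n * mobius a w ^ n) ^ 2 *
        ((1 - a ^ 2) / (1 + a * w) ^ 2)) w :=
  (hasDerivAt_powBlaschke n (one_sub_pow_mul_pow_ne_zero ha (norm_mobius_lt_one ha hw) hn)).comp w
    (hasDerivAt_mobius (one_add_mul_ne_zero ha hw))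

theorem deriv_powBlaschke_comp_mobius_eq_zero_iff {a : ℝ} (ha : |a| < 1) {n : ℕ} (hn : 2 ≤ n)
    {w : ℂ} (hw : ‖w‖ < 1) : deriv (powBlaschke n a ∘ mobius a) w = 0 ↔ w = -a := by
  rw [(hasDerivAt_powBlaschke_comp_mobius ha (by omega) hw).deriv]
  simp only [mul_eq_zero, div_eq_zero_iff, pow_eq_zero_iff, Nat.cast_eq_zero, ne_eq,
    OfNat.ofNat_ne_zero, not_false_eq_true, show n ≠ 0 by omega, show n - 1 ≠ 0 by omega,
    one_sub_pow_two_mul_ne_zero ha (n := n) (by omega), one_sub_sq_ne_zero ha,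
    one_sub_pow_mul_pow_ne_zero ha (norm_mobius_lt_one ha hw) (n := n) (by omega),
    one_add_mul_ne_zero ha hw, false_or, or_false, or_self]
  simp [mobius, one_add_mul_ne_zero ha hw, eq_neg_iff_add_eq_zero]

theorem deriv_powBlaschke_comp_mobius_zero {a : ℝ} (ha : |a| < 1) {n : ℕ} (hn : n ≠ 0) :
    deriv (powBlaschke n a ∘ mobius a) 0 = n * a ^ (n - 1) * (1 - a ^ 2) / (1 - a ^ (2 * n)) := by
  rw [(hasDerivAt_powBlaschke_comp_mobius ha hn (by simp)).deriv]
  have h := one_sub_pow_two_mul_ne_zero ha hn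
  rw [two_mul, pow_add] at h ⊢
  simp only [mobius, mul_zero, zero_add, add_zero, div_one, one_pow]
  field_simp

theorem powBlaschke_comp_mobius_neg (a : ℂ) {n : ℕ} (hn : n ≠ 0) :
    (powBlaschke n a ∘ mobius a) (-a) = -a ^ n := by
  simp [powBlaschke, mobius, hn]

theorem norm_powBlaschke_comp_mobius_neg_div {a : ℝ} (ha0 : 0 < a) (ha1 : a < 1) {n : ℕ}
    (hn : n ≠ 0) :
    ‖(powBlaschke n a ∘ mobius a) (-a) / (-a * deriv (powBlaschke n a ∘ mobius a) 0)‖ =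
      (1 - a ^ (2 * n)) / (n * (1 - a ^ 2)) := by
  have ha : |a| < 1 := by rwa [abs_of_pos ha0]
  have h2n := one_sub_pow_two_mul_ne_zero ha hn
  have h2 := one_sub_sq_ne_zero ha
  have ha0' : (a : ℂ) ≠ 0 := ofReal_ne_zero.mpr ha0.ne'
  have hpow : (a : ℂ) ^ n = a * a ^ (n - 1) := by rw [← pow_succ', Nat.sub_add_cancel (by omega)]
  rw [powBlaschke_comp_mobius_neg _ hn, deriv_powBlaschke_comp_mobius_zero ha hn, hpow]
  have hreal : -(a * a ^ (n - 1) : ℂ) / (-a * (n * a ^ (n - 1) * (1 - a ^ 2) / (1 - a ^ (2 * n))))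
      = (((1 - a ^ (2 * n)) / (n * (1 - a ^ 2)) : ℝ) : ℂ) := by
    push_cast
    field_simp
  have hpos : 0 ≤ (1 - a ^ (2 * n)) / (n * (1 - a ^ 2)) := by
    have : a ^ (2 * n) ≤ 1 := pow_le_one₀ ha0.le ha1.le
    have : a ^ 2 < 1 := by nlinarith
    positivity
  rw [hreal, norm_real, Real.norm_eq_abs, abs_of_nonneg hpos]

theorem exists_pos_lt_one_ratio_lt {n : ℕ} (hn : n ≠ 0) {ε : ℝ} (hε : 0 < ε) :
    ∃ a : ℝ, (0 < a ∧ a < 1) ∧ (1 - a ^ (2 * n)) / (n * (1 - a ^ 2)) < 1 / n + ε := by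
  have hcont : ContinuousAt (fun a : ℝ => (1 - a ^ (2 * n)) / (n * (1 - a ^ 2))) 0 :=
    ContinuousAt.div (by fun_prop) (by fun_prop) (by simpa using hn)
  have hlim : Tendsto (fun a : ℝ => (1 - a ^ (2 * n)) / (n * (1 - a ^ 2))) (𝓝[>] 0)
      (𝓝 (1 / (n : ℝ))) := by
    simpa [hn] using hcont.tendsto.mono_left nhdsWithin_le_nhds
  have hsmall : ∀ᶠ a in 𝓝[>] (0 : ℝ), a ∈ Set.Ioo 0 1 := Ioo_mem_nhdsGT one_pos
  exact (hsmall.and (hlim.eventually (gt_mem_nhds (lt_add_of_pos_right _ hε)))).exists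

/-- `L_n ≤ 1/n`: for every `ε > 0` there is a finite Blaschke product `B` of degree
`n` with `B(0) = 0`, `B'(0) ≠ 0`, whose critical points `ζ` in the unit disk all
satisfy `|B(ζ)/(ζ B'(0))| < 1/n + ε`. -/
theorem L_n_le_inv_n (n : ℕ) (hn : 2 ≤ n) (ε : ℝ) (hε : 0 < ε) :
    ∃ (z : Fin (n - 1) → ℂ) (B : ℂ → ℂ),
      (∀ k, ‖z k‖ < 1) ∧
      B = (fun w => w * ∏ k, (w - z k) / (1 - (starRingEnd ℂ) (z k) * w)) ∧
      deriv B 0 ≠ 0 ∧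
      (∃ ζ : ℂ, ‖ζ‖ < 1 ∧ deriv B ζ = 0) ∧
      ∀ ζ : ℂ, ‖ζ‖ < 1 → deriv B ζ = 0 →
        ‖B ζ / (ζ * deriv B 0)‖ < 1 / n + ε := by
  have hn0 : n ≠ 0 := by omega
  obtain ⟨a, ⟨ha0, ha1⟩, hratio⟩ := exists_pos_lt_one_ratio_lt hn0 hε
  have ha : |a| < 1 := by rwa [abs_of_pos ha0]
  obtain ⟨ω, hω⟩ : ∃ ω : ℂ, IsPrimitiveRoot ω n := ⟨_, isPrimitiveRoot_exp n hn0⟩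
  let z : Fin (n - 1) → ℂ := fun k => mobius (-a) (a * ω ^ ((k : ℕ) + 1))
  let B : ℂ → ℂ := fun w => w * ∏ k, (w - z k) / (1 - conj (z k) * w)
  let F := powBlaschke n a ∘ mobius a
  refine ⟨z, B, fun k => ?_, rfl, ?_⟩
  · have hz : ‖(a : ℂ) * ω ^ ((k : ℕ) + 1)‖ < 1 := by
      rwa [norm_mul, norm_pow, hω.norm'_eq_one hn0, one_pow, mul_one, norm_real, Real.norm_eq_abs]
    simpa using norm_mobius_lt_one (a := -a) (by rwa [abs_neg]) hz
  have hBF : ∀ w, ‖w‖ < 1 → B w = F w := fun w hw =>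
    mul_prod_blaschkeFactor_eq_powBlaschke_mobius (by omega) hω ha hw
  have hderiv : ∀ w, ‖w‖ < 1 → deriv B w = deriv F w := by
    intro w hw
    apply Filter.EventuallyEq.deriv_eq
    filter_upwards [Metric.isOpen_ball.mem_nhds (mem_ball_zero_iff.mpr hw)] with v hv
    exact hBF v (mem_ball_zero_iff.mp hv)
  have h0 : ‖(0 : ℂ)‖ < 1 := by simp
  have hneg : ‖-(a : ℂ)‖ < 1 := by rwa [norm_neg, norm_real, Real.norm_eq_abs]
  refine ⟨?_, ⟨-a, hneg, ?_⟩, fun ζ hζ hcrit => ?_⟩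
  · rw [hderiv 0 h0, deriv_powBlaschke_comp_mobius_zero ha hn0]
    simp [hn0, ha0.ne', one_sub_sq_ne_zero ha, one_sub_pow_two_mul_ne_zero ha hn0]
  · rw [hderiv _ hneg, deriv_powBlaschke_comp_mobius_eq_zero_iff ha hn hneg]
  · obtain rfl := (deriv_powBlaschke_comp_mobius_eq_zero_iff ha hn hζ).mp (hderiv ζ hζ ▸ hcrit)
    rw [hBF _ hneg, hderiv 0 h0, norm_powBlaschke_comp_mobius_neg_div ha0 ha1 hn0]
    exact hratio
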